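/- arXiv:1511.04978 — 2 statements merged into one kernel-verified Lean document; each statement's English description precedes it below -/
import Mathlib

section
/- Let B = ⟨a, b ∣ a b a⁻¹ b = 1⟩ be the Klein bottle group. Then for every automorphism φ of B there exists j ∈ ℤ such that φ(a) = a bʲ or φ(a) = a⁻¹ bʲ. -/
/-- The single relator `a * b * a⁻¹ * b` of the Klein bottle group,
where `a = FreeGroup.of 0` and `b = FreeGroup.of 1`. -/
def kleinBottleRels : Set (FreeGroup (Fin 2)) :=
  {FreeGroup.of 0 * FreeGroup.of 1 * (FreeGroup.of 0)⁻¹ * FreeGroup.of 1}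

/-- The Klein bottle group `B = ⟨a, b ∣ a b a⁻¹ b = 1⟩`. -/
abbrev KleinBottleGroup : Type := PresentedGroup kleinBottleRels

/-- The generator `a` of the Klein bottle group. -/
def kleinA : KleinBottleGroup := PresentedGroup.of 0

/-- The generator `b` of the Klein bottle group. -/
def kleinB : KleinBottleGroup := PresentedGroup.of 1

/-!
Since `a b a⁻¹ = b⁻¹`, every element of `B` can be written as `bⁿ aᵐ`. A homomorphism from `B`
to a torsion-free abelian group kills `b`, because `b` is conjugate to its inverse. Hence for the
degree `deg : B → ℤ` (`a ↦ 1`, `b ↦ 0`) the surjection `deg ∘ φ` sends `bⁿ aᵐ` to `m · deg (φ a)`,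
which forces `deg (φ a) = ±1`. So `φ a = bⁿ a^{±1}`, and moving `bⁿ` past `a^{±1}` gives the claim.
-/

open Multiplicative

theorem kleinA_mul_kleinB_mul_kleinA_inv : kleinA * kleinB * kleinA⁻¹ = kleinB⁻¹ :=
  eq_inv_of_mul_eq_one_left <| PresentedGroup.one_of_mem rfl

theorem kleinA_mul_kleinB_zpow (n : ℤ) : kleinA * kleinB ^ n = kleinB ^ (-n) * kleinA := by
  rw [← mul_inv_eq_iff_eq_mul, ← conj_zpow, kleinA_mul_kleinB_mul_kleinA_inv, inv_zpow']

theorem kleinA_inv_mul_kleinB_zpow (n : ℤ) : kleinA⁻¹ * kleinB ^ n = kleinB ^ (-n) * kleinA⁻¹ := by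
  rw [inv_mul_eq_iff_eq_mul, ← mul_assoc, kleinA_mul_kleinB_zpow, neg_neg, mul_inv_cancel_right]

theorem closure_kleinA_kleinB : Subgroup.closure {kleinA, kleinB} = ⊤ := by
  rw [← PresentedGroup.closure_range_of, Set.range, kleinA, kleinB]
  congr 1
  ext
  simp [Fin.exists_fin_two, eq_comm]

theorem exists_eq_kleinB_zpow_mul_kleinA_zpow (x : KleinBottleGroup) :
    ∃ n m : ℤ, x = kleinB ^ n * kleinA ^ m := by
  have hx : x ∈ Subgroup.closure {kleinA, kleinB} := closure_kleinA_kleinB ▸ trivial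
  induction hx using Subgroup.closure_induction_left with
  | one => exact ⟨0, 0, by simp⟩
  | mul_left g hg y _ ih =>
    obtain ⟨n, m, rfl⟩ := ih
    rcases hg with rfl | rfl
    · exact ⟨-n, 1 + m, by rw [← mul_assoc, kleinA_mul_kleinB_zpow, mul_assoc, zpow_one_add]⟩
    · exact ⟨1 + n, m, by rw [zpow_add, zpow_one, mul_assoc]⟩
  | inv_mul_cancel g hg y _ ih =>
    obtain ⟨n, m, rfl⟩ := ih
    rcases hg with rfl | rfl
    · exact ⟨-n, -1 + m, by
        rw [← mul_assoc, kleinA_inv_mul_kleinB_zpow, mul_assoc, zpow_add, zpow_neg_one]⟩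
    · exact ⟨-1 + n, m, by rw [zpow_add, zpow_neg_one, mul_assoc]⟩

theorem map_kleinB_eq_one {G : Type*} [CommGroup G] [IsMulTorsionFree G]
    (f : KleinBottleGroup →* G) : f kleinB = 1 := by
  have h := congrArg f kleinA_mul_kleinB_mul_kleinA_inv
  rw [map_mul, map_mul, map_inv, map_inv, mul_inv_cancel_comm, eq_inv_iff_mul_eq_one,
    ← pow_two, ← one_pow 2] at h
  exact pow_left_injective two_ne_zero h

def kleinDeg : KleinBottleGroup →* Multiplicative ℤ :=
  PresentedGroup.toGroup (f := ![ofAdd 1, 1]) (by rintro r rfl; simp)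

theorem kleinDeg_kleinB_zpow_mul_kleinA_zpow (n m : ℤ) :
    kleinDeg (kleinB ^ n * kleinA ^ m) = ofAdd m := by
  rw [map_mul, map_zpow, map_zpow, map_kleinB_eq_one, one_zpow, one_mul]
  simp [kleinDeg, kleinA, ← ofAdd_zsmul]

theorem kleinDeg_surjective : Function.Surjective kleinDeg := fun k ↦
  ⟨kleinA ^ toAdd k, by simpa using kleinDeg_kleinB_zpow_mul_kleinA_zpow 0 (toAdd k)⟩

theorem map_kleinA_eq_ofAdd_one_or_neg_one {f : KleinBottleGroup →* Multiplicative ℤ}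
    (hf : Function.Surjective f) : f kleinA = ofAdd 1 ∨ f kleinA = ofAdd (-1) := by
  obtain ⟨x, hx⟩ := hf (ofAdd 1)
  obtain ⟨n, m, rfl⟩ := exists_eq_kleinB_zpow_mul_kleinA_zpow x
  rw [map_mul, map_zpow, map_zpow, map_kleinB_eq_one, one_zpow, one_mul] at hx
  have hm : toAdd (f kleinA) * m = 1 := by
    simpa [mul_comm] using congrArg toAdd hx
  rcases Int.eq_one_or_neg_one_of_mul_eq_one hm with h | h
  · exact Or.inl (toAdd.injective h)
  · exact Or.inr (toAdd.injective h)

/-- For every automorphism `φ` of the Klein bottle group there is `j : ℤ` with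
`φ a = a * b ^ j` or `φ a = a⁻¹ * b ^ j`. -/
theorem kleinBottle_aut_a (φ : KleinBottleGroup ≃* KleinBottleGroup) :
    ∃ j : ℤ, φ kleinA = kleinA * kleinB ^ j ∨ φ kleinA = kleinA⁻¹ * kleinB ^ j := by
  obtain ⟨n, m, hφa⟩ := exists_eq_kleinB_zpow_mul_kleinA_zpow (φ kleinA)
  have hdeg : kleinDeg (φ kleinA) = ofAdd m := by
    rw [hφa, kleinDeg_kleinB_zpow_mul_kleinA_zpow]
  have hsurj : Function.Surjective (kleinDeg.comp φ.toMonoidHom) :=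
    kleinDeg_surjective.comp φ.surjective
  refine ⟨-n, ?_⟩
  rcases map_kleinA_eq_ofAdd_one_or_neg_one hsurj with h | h <;>
    obtain rfl := ofAdd.injective (hdeg.symm.trans h)
  · left
    rw [hφa, zpow_one, kleinA_mul_kleinB_zpow, neg_neg]
  · right
    rw [hφa, zpow_neg_one, kleinA_inv_mul_kleinB_zpow, neg_neg]
end

section
/- The Klein bottle group B = ⟨a, b ∣ a b a⁻¹ b = 1⟩ is torsion-free: if x ∈ B and xⁿ = 1 for some positive integer n, then x = 1. -/
/-!
The exponent sum of `a` is a homomorphism `B → ℤ`, so an element of finite order lies in its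
kernel. Since `a b a⁻¹ = b⁻¹`, the subgroup `⟨b⟩` is normalized by `a`, hence `B = ⟨a⟩⟨b⟩` and the
kernel is `⟨b⟩`. Finally `b` has infinite order: it maps to a rotation of infinite order in the
infinite dihedral group, where `a` acts as a reflection.
-/

theorem IsOfFinOrder.eq_one_of_ker {G H : Type*} [Group G] [Group H] [IsMulTorsionFree H]
    (f : G →* H) (hker : ∀ y ∈ f.ker, IsOfFinOrder y → y = 1) {x : G} (hx : IsOfFinOrder x) :
    x = 1 := by
  refine hker x ?_ hx
  by_contra hfx
  exact not_isOfFinOrder_of_isMulTorsionFree hfx (f.isOfFinOrder hx)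

theorem eq_one_of_mem_zpowers_of_isOfFinOrder {G : Type*} [Group G] {g y : G}
    (hg : ¬IsOfFinOrder g) (hy : y ∈ Subgroup.zpowers g) (hfin : IsOfFinOrder y) : y = 1 := by
  obtain ⟨m, rfl⟩ := hy
  obtain ⟨k, hk, hpow⟩ := isOfFinOrder_iff_pow_eq_one.mp hfin
  have hmk : m * k = 0 := injective_zpow_iff_not_isOfFinOrder.mpr hg <| by
    simpa [zpow_mul] using hpow
  simp [(mul_eq_zero.mp hmk).resolve_right (by positivity)]

namespace KleinBottleGroup

theorem kleinA_mul_kleinB_mul_kleinA_inv : kleinA * kleinB * kleinA⁻¹ = kleinB⁻¹ :=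
  mul_eq_one_iff_eq_inv.mp (PresentedGroup.one_of_mem rfl)

def exponentSumA : KleinBottleGroup →* Multiplicative ℤ :=
  PresentedGroup.toGroup (f := ![Multiplicative.ofAdd 1, 1]) <| by
    rintro _ rfl
    simp

@[simp]
theorem exponentSumA_kleinA : exponentSumA kleinA = Multiplicative.ofAdd 1 := by
  simp [exponentSumA, kleinA, PresentedGroup.toGroup.of]

@[simp]
theorem exponentSumA_kleinB : exponentSumA kleinB = 1 := by
  simp [exponentSumA, kleinB, PresentedGroup.toGroup.of]

open DihedralGroup in
def toInfiniteDihedral : KleinBottleGroup →* DihedralGroup 0 :=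
  PresentedGroup.toGroup (f := ![sr 0, r 1]) <| by
    rintro _ rfl
    simp [sr_mul_r, sr_mul_sr]

theorem not_isOfFinOrder_kleinB : ¬IsOfFinOrder kleinB := fun h => by
  have := (toInfiniteDihedral.isOfFinOrder h).orderOf_pos
  simp [toInfiniteDihedral, kleinB, PresentedGroup.toGroup.of, DihedralGroup.orderOf_r_one] at this

theorem kleinA_mem_normalizer_zpowers_kleinB :
    kleinA ∈ Subgroup.normalizer (Subgroup.zpowers kleinB : Set KleinBottleGroup) := by
  rw [Subgroup.mem_normalizer_iff_map_conj_eq, MonoidHom.map_zpowers, MonoidHom.coe_coe,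
    MulAut.conj_apply, kleinA_mul_kleinB_mul_kleinA_inv, Subgroup.zpowers_inv]

theorem zpowers_kleinA_sup_zpowers_kleinB :
    Subgroup.zpowers kleinA ⊔ Subgroup.zpowers kleinB = ⊤ := by
  rw [← PresentedGroup.closure_range_of, Subgroup.zpowers_eq_closure, Subgroup.zpowers_eq_closure,
    ← Subgroup.closure_union]
  congr 1
  ext x
  simp [kleinA, kleinB, Fin.exists_fin_two, eq_comm, or_comm]

open Pointwise in
theorem ker_exponentSumA_le : exponentSumA.ker ≤ Subgroup.zpowers kleinB := by
  intro x hx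
  have hx' : x ∈ (Subgroup.zpowers kleinA : Set KleinBottleGroup) * Subgroup.zpowers kleinB := by
    rw [← Subgroup.coe_mul_of_left_le_normalizer_right _ _
      (Subgroup.zpowers_le.mpr kleinA_mem_normalizer_zpowers_kleinB),
      zpowers_kleinA_sup_zpowers_kleinB]
    trivial
  obtain ⟨_, ⟨p, rfl⟩, _, ⟨m, rfl⟩, rfl⟩ := hx'
  have hp : p = 0 := by simpa [← ofAdd_zsmul] using hx
  simp [hp]

end KleinBottleGroup

/-- The Klein bottle group is torsion-free. -/
theorem kleinBottle_torsionFree (x : KleinBottleGroup) (n : ℕ) (hn : 0 < n)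
    (hx : x ^ n = 1) : x = 1 :=
  (isOfFinOrder_iff_pow_eq_one.mpr ⟨n, hn, hx⟩).eq_one_of_ker KleinBottleGroup.exponentSumA
    fun _ hy => eq_one_of_mem_zpowers_of_isOfFinOrder KleinBottleGroup.not_isOfFinOrder_kleinB
      (KleinBottleGroup.ker_exponentSumA_le hy)
end
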